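/- Let ψ : ℂ[y₀,y₁,y₂,y₃] → ℂ[x₀,x₁,x₂,x₃] be the ℂ-algebra homomorphism determined by ψ(y₀) = x₀, ψ(y₁) = x₁² − x₀x₂, ψ(y₂) = x₁³ + (1/2)x₀²x₃ − (3/2)x₀x₁x₂, ψ(y₃) = 2x₀x₁x₂x₃ − (1/3)x₀²x₃² + x₁²x₂² − (4/3)x₁³x₃ − (4/3)x₀x₂³. Then the kernel of ψ is the principal ideal generated by 3y₀²y₃ − 4y₁³ + 4y₂². Consequently the image of ψ (the invariant ring of the ℂ⁺-action on Sym³(ℂ²)) is isomorphic to ℂ[y₀,y₁,y₂,y₃]/(3y₀²y₃ − 4y₁³ + 4y₂²), the coordinate ring of the degree-6 hypersurface 3y₀²y₃ = 4y₁³ − 4y₂² in the weighted projective space ℙ(1,2,3,4). -/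

import Mathlib

/-!
Make `y₃` the polynomial variable over `A = ℂ[y₀, y₁, y₂]`; the relation becomes `a y₃ - b` with
`a = 3y₀²` and `b = 4y₁³ - 4y₂²` relatively prime in `A`. The map `ψ` is injective on `A`, since
the images of `y₀, y₁, y₂` take every value with `y₀ ≠ 0` (put `x₁ = 0` and solve for
`x₀, x₂, x₃`). If `ψ P = 0`, then `a ^ deg P * P` is congruent modulo `a y₃ - b` to some `r ∈ A`,
and `ψ r = 0` forces `r = 0`; as `a y₃ - b` is prime to `a`, it divides `P`. The image of `ψ` is
then described by the first isomorphism theorem.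
-/

open MvPolynomial

/-- The `ℂ`-algebra homomorphism `ψ : ℂ[y₀,y₁,y₂,y₃] → ℂ[x₀,x₁,x₂,x₃]` sending
`y₀ ↦ x₀`, `y₁ ↦ x₁² − x₀x₂`, `y₂ ↦ x₁³ + (1/2)x₀²x₃ − (3/2)x₀x₁x₂`,
`y₃ ↦ 2x₀x₁x₂x₃ − (1/3)x₀²x₃² + x₁²x₂² − (4/3)x₁³x₃ − (4/3)x₀x₂³`. -/
noncomputable def psi :
    MvPolynomial (Fin 4) ℂ →ₐ[ℂ] MvPolynomial (Fin 4) ℂ :=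
  aeval ![X 0,
          X 1 ^ 2 - X 0 * X 2,
          X 1 ^ 3 + C (1 / 2 : ℂ) * X 0 ^ 2 * X 3 - C (3 / 2 : ℂ) * X 0 * X 1 * X 2,
          C (2 : ℂ) * X 0 * X 1 * X 2 * X 3 - C (1 / 3 : ℂ) * X 0 ^ 2 * X 3 ^ 2
            + X 1 ^ 2 * X 2 ^ 2 - C (4 / 3 : ℂ) * X 1 ^ 3 * X 3
            - C (4 / 3 : ℂ) * X 0 * X 2 ^ 3]

namespace Polynomial

variable {R : Type*} [CommRing R]

theorem exists_C_mul_X_sub_C_dvd_C_pow_mul_sub_C (a b : R) (P : R[X]) :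
    ∃ r : R, C a * X - C b ∣ C a ^ P.natDegree * P - C r := by
  set n := P.natDegree
  refine ⟨∑ i ∈ Finset.range (n + 1), P.coeff i * a ^ (n - i) * b ^ i, ?_⟩
  have hterm : ∀ i ≤ n, C a ^ n * (C (P.coeff i) * X ^ i) - C (P.coeff i * a ^ (n - i) * b ^ i) =
      C (P.coeff i * a ^ (n - i)) * ((C a * X) ^ i - C b ^ i) := by
    intro i hi
    obtain ⟨k, hk⟩ := Nat.exists_eq_add_of_le hi
    rw [hk, Nat.add_sub_cancel_left]
    simp only [map_mul, map_pow]
    ring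
  have hsum : C a ^ n * P - C (∑ i ∈ Finset.range (n + 1), P.coeff i * a ^ (n - i) * b ^ i) =
      ∑ i ∈ Finset.range (n + 1), C (P.coeff i * a ^ (n - i)) * ((C a * X) ^ i - C b ^ i) := by
    conv_lhs => enter [1, 2]; rw [P.as_sum_range_C_mul_X_pow]
    rw [Finset.mul_sum, map_sum, ← Finset.sum_sub_distrib]
    exact Finset.sum_congr rfl fun i hi => hterm i (Nat.lt_succ_iff.mp (Finset.mem_range.mp hi))
  rw [hsum]
  exact Finset.dvd_sum fun i _ => dvd_mul_of_dvd_right (sub_dvd_pow_sub_pow _ _ _) _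

theorem isRelPrime_C_C_mul_X_sub_C [IsDomain R] {a b : R} (hab : IsRelPrime a b) :
    IsRelPrime (C a) (C a * X - C b) := by
  intro d hda hdG
  rcases eq_or_ne a 0 with rfl | ha
  · have hb : IsUnit b := hab (dvd_zero b) dvd_rfl
    rw [map_zero, zero_mul, zero_sub] at hdG
    exact isUnit_of_dvd_unit hdG (hb.map C).neg
  · have hdeg : d.natDegree = 0 :=
      Nat.le_zero.mp ((natDegree_le_of_dvd hda (C_ne_zero.mpr ha)).trans (natDegree_C a).le)
    rw [eq_C_of_natDegree_eq_zero hdeg] at hda hdG ⊢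
    have hdb : C (d.coeff 0) ∣ C b := (dvd_sub_right (hda.mul_right X)).mp hdG
    rw [C_dvd_iff_dvd_coeff] at hda hdb
    simpa using (hab (by simpa using hda 0) (by simpa using hdb 0)).map C

theorem ker_eq_span_C_mul_X_sub_C [IsDomain R] [DecompositionMonoid R[X]] {S F : Type*}
    [CommRing S] [FunLike F R[X] S] [RingHomClass F R[X] S] (φ : F) {a b : R} (hab : IsRelPrime a b)
    (hC : ∀ r, φ (C r) = 0 → r = 0) (hφ : φ (C a * X - C b) = 0) :
    RingHom.ker φ = Ideal.span {C a * X - C b} := by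
  refine le_antisymm (fun P hP => ?_) ((Ideal.span_singleton_le_iff_mem _).mpr hφ)
  obtain ⟨r, Q, hQ⟩ := exists_C_mul_X_sub_C_dvd_C_pow_mul_sub_C a b P
  have hr : r = 0 := by
    refine hC r ?_
    have := congrArg φ hQ
    rwa [map_sub, map_mul, map_mul, hφ, RingHom.mem_ker.mp hP, mul_zero, zero_mul, zero_sub,
      neg_eq_zero] at this
  rw [hr, map_zero, sub_zero] at hQ
  exact Ideal.mem_span_singleton.mpr
    ((isRelPrime_C_C_mul_X_sub_C hab).pow_left.symm.dvd_of_dvd_mul_left ⟨Q, hQ⟩)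

end Polynomial

namespace MvPolynomial

theorem eval_aeval {σ τ R : Type*} [CommRing R] (g : σ → MvPolynomial τ R) (x : τ → R)
    (p : MvPolynomial σ R) : eval x (aeval g p) = eval (fun j => eval x (g j)) p := by
  rw [aeval_eq_bind₁]
  exact eval₂Hom_bind₁ _ _ _ _

theorem injective_aeval_of_forall_ne_zero_exists_eval_eq {σ τ R : Type*} [CommRing R]
    [IsDomain R] [Infinite R] (g : σ → MvPolynomial τ R) (i : σ)
    (hg : ∀ v : σ → R, v i ≠ 0 → ∃ x : τ → R, ∀ j, eval x (g j) = v j) :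
    Function.Injective (aeval (R := R) g) := by
  refine (injective_iff_map_eq_zero _).mpr fun c hc => ?_
  have hvanish : X i * c = 0 := MvPolynomial.funext fun v => by
    rcases eq_or_ne (v i) 0 with hv | hv
    · simp [hv]
    · obtain ⟨x, hx⟩ := hg v hv
      have := congrArg (eval x) hc
      rw [eval_aeval, map_zero, _root_.funext hx] at this
      simp [this]
  exact (mul_eq_zero.mp hvanish).resolve_left (X_ne_zero i)

variable (R : Type*) [CommSemiring R] (n : ℕ)

noncomputable def finSuccEquivLast :
    MvPolynomial (Fin (n + 1)) R ≃ₐ[R] Polynomial (MvPolynomial (Fin n) R) :=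
  (renameEquiv R _root_.finSuccEquivLast).trans (optionEquivLeft R (Fin n))

variable {R n}

@[simp]
theorem finSuccEquivLast_X_castSucc (i : Fin n) :
    finSuccEquivLast R n (X i.castSucc) = Polynomial.C (X i) := by
  simp [finSuccEquivLast, optionEquivLeft_X_some]

@[simp]
theorem finSuccEquivLast_X_last : finSuccEquivLast R n (X (Fin.last n)) = Polynomial.X := by
  simp [finSuccEquivLast, optionEquivLeft_X_none]

@[simp]
theorem finSuccEquivLast_C (r : R) : finSuccEquivLast R n (C r) = Polynomial.C (C r) := by
  simp [finSuccEquivLast, optionEquivLeft_C]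

theorem finSuccEquivLast_symm_C (p : MvPolynomial (Fin n) R) :
    (finSuccEquivLast R n).symm (Polynomial.C p) = rename Fin.castSucc p := by
  rw [AlgEquiv.symm_apply_eq]
  have h : (finSuccEquivLast R n).toAlgHom.comp (rename Fin.castSucc) = Polynomial.CAlgHom :=
    algHom_ext fun i => by simp
  exact (AlgHom.congr_fun h p).symm

end MvPolynomial

noncomputable def psiRelation : MvPolynomial (Fin 4) ℂ :=
  C 3 * X 0 ^ 2 * X 3 - C 4 * X 1 ^ 3 + C 4 * X 2 ^ 2

theorem psi_psiRelation : psi psiRelation = 0 := by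
  refine MvPolynomial.funext fun x => ?_
  simp only [psi, psiRelation, eval_aeval, map_add, map_sub, map_mul, map_pow, eval_X, eval_C,
    Matrix.cons_val_zero, Matrix.cons_val_one, Matrix.cons_val_two, Matrix.cons_val_three,
    Matrix.head_cons, Matrix.tail_cons, map_zero]
  ring

theorem finSuccEquivLast_psiRelation :
    finSuccEquivLast ℂ 3 psiRelation =
      Polynomial.C (C 3 * X 0 ^ 2) * Polynomial.X -
        Polynomial.C (C 4 * X 1 ^ 3 - C 4 * X 2 ^ 2) := by
  have h0 : finSuccEquivLast ℂ 3 (X 0) = Polynomial.C (X 0) := finSuccEquivLast_X_castSucc 0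
  have h1 : finSuccEquivLast ℂ 3 (X 1) = Polynomial.C (X 1) := finSuccEquivLast_X_castSucc 1
  have h2 : finSuccEquivLast ℂ 3 (X 2) = Polynomial.C (X 2) := finSuccEquivLast_X_castSucc 2
  have h3 : finSuccEquivLast ℂ 3 (X 3) = Polynomial.X := finSuccEquivLast_X_last
  simp only [psiRelation, map_add, map_sub, map_mul, map_pow, finSuccEquivLast_C, h0, h1, h2, h3]
  ring

theorem isRelPrime_psiRelation_coeffs :
    IsRelPrime (C 3 * X 0 ^ 2 : MvPolynomial (Fin 3) ℂ) (C 4 * X 1 ^ 3 - C 4 * X 2 ^ 2) := by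
  have hX : ¬ (X 0 : MvPolynomial (Fin 3) ℂ) ∣ C 4 * X 1 ^ 3 - C 4 * X 2 ^ 2 := by
    rintro ⟨q, hq⟩
    simpa using congrArg (eval ![0, 1, 0]) hq
  rw [isRelPrime_mul_unit_left_left ((isUnit_iff_ne_zero.mpr (by norm_num : (3 : ℂ) ≠ 0)).map C)]
  exact ((X_prime.irreducible.isRelPrime_iff_not_dvd).mpr hX).pow_left

theorem exists_eval_psi_X_castSucc_eq (v : Fin 3 → ℂ) (hv : v 0 ≠ 0) :
    ∃ x : Fin 4 → ℂ, ∀ j : Fin 3, eval x (psi (X j.castSucc)) = v j := by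
  refine ⟨![v 0, 0, -v 1 / v 0, 2 * v 2 / v 0 ^ 2], fun j => ?_⟩
  fin_cases j <;>
    simp only [psi, aeval_X, Fin.zero_eta, Fin.mk_one, Fin.reduceFinMk, Fin.castSucc_zero,
      Fin.castSucc_one, Fin.reduceCastSucc, Matrix.cons_val, Matrix.cons_val_one,
      Matrix.cons_val_zero, map_sub, map_add, map_pow, map_mul, eval_X, eval_C] <;>
    field_simp <;> ring

theorem injective_psi_comp_rename_castSucc :
    Function.Injective (psi.comp (rename (Fin.castSucc : Fin 3 → Fin 4))) := by
  have h : psi.comp (rename Fin.castSucc) = aeval fun j : Fin 3 => psi (X j.castSucc) :=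
    algHom_ext fun j => by simp
  rw [h]
  exact injective_aeval_of_forall_ne_zero_exists_eval_eq _ 0 exists_eval_psi_X_castSucc_eq

/-- The kernel of `ψ` is the principal ideal generated by `3y₀²y₃ − 4y₁³ + 4y₂²`;
consequently the invariant ring of the `ℂ⁺`-action on `Sym³(ℂ²)` (the image of `ψ`)
is isomorphic to `ℂ[y₀,y₁,y₂,y₃]/(3y₀²y₃ − 4y₁³ + 4y₂²)`, the coordinate ring of the
degree-6 hypersurface `3y₀²y₃ = 4y₁³ − 4y₂²` in `ℙ(1,2,3,4)`. -/
theorem psi_ker_eq_span :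
    RingHom.ker psi =
      Ideal.span ({(C (3 : ℂ)) * X 0 ^ 2 * X 3 - C (4 : ℂ) * X 1 ^ 3 + C (4 : ℂ) * X 2 ^ 2} :
        Set (MvPolynomial (Fin 4) ℂ)) ∧
    Nonempty
      ((MvPolynomial (Fin 4) ℂ ⧸
          Ideal.span ({(C (3 : ℂ)) * X 0 ^ 2 * X 3 - C (4 : ℂ) * X 1 ^ 3 + C (4 : ℂ) * X 2 ^ 2} :
            Set (MvPolynomial (Fin 4) ℂ))) ≃ₐ[ℂ] psi.range) := by
  have hker : RingHom.ker psi = Ideal.span {psiRelation} := by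
    have h := Polynomial.ker_eq_span_C_mul_X_sub_C
      (psi.comp (finSuccEquivLast ℂ 3).symm.toAlgHom) isRelPrime_psiRelation_coeffs
      (fun r hr => (injective_iff_map_eq_zero _).mp injective_psi_comp_rename_castSucc r
        (by simpa [finSuccEquivLast_symm_C] using hr))
      (by rw [← finSuccEquivLast_psiRelation]; simpa using psi_psiRelation)
    ext p
    rw [RingHom.mem_ker, Ideal.mem_span_singleton, ← map_dvd_iff (finSuccEquivLast ℂ 3),
      finSuccEquivLast_psiRelation, ← Ideal.mem_span_singleton, ← h, RingHom.mem_ker]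
    simp
  exact ⟨hker, ⟨(Ideal.quotientEquivAlgOfEq ℂ hker.symm).trans (Ideal.quotientKerEquivRange psi)⟩⟩
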